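/- If -1/2 + √(2/(5 - √5)) < r < 1/2, then ⌈2π/θ⌉ = 6 where θ = arccos(1 - 1/(2(1/2 + r)²)); equivalently π/3 < θ < 2π/5. -/
import Mathlib

theorem radial_chromatic_six (r : ℝ)
    (hr0 : -(1 / 2) + Real.sqrt (2 / (5 - Real.sqrt 5)) < r) (hr1 : r < 1 / 2) :
    ⌈2 * Real.pi / Real.arccos (1 - 1 / (2 * (1 / 2 + r) ^ 2))⌉₊ = 6 ∧
      Real.pi / 3 < Real.arccos (1 - 1 / (2 * (1 / 2 + r) ^ 2)) ∧
      Real.arccos (1 - 1 / (2 * (1 / 2 + r) ^ 2)) < 2 * Real.pi / 5 := by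
  have h5 : Real.sqrt 5 ^ 2 = 5 := Real.sq_sqrt (by norm_num)
  have h5lb : (2 : ℝ) < Real.sqrt 5 := by nlinarith [Real.sqrt_nonneg 5]
  have h5ub : Real.sqrt 5 < 3 := by nlinarith [Real.sqrt_nonneg 5]
  set ρ := 1 / 2 + r with hρ
  have hρ1 : ρ < 1 := by rw [hρ]; linarith
  set s := Real.sqrt (2 / (5 - Real.sqrt 5)) with hs
  have hspos : 0 < s := Real.sqrt_pos.2 (div_pos (by norm_num) (by nlinarith))
  have hsρ : s < ρ := by rw [hρ]; linarith
  have hs2 : s ^ 2 = 2 / (5 - Real.sqrt 5) := Real.sq_sqrt (div_nonneg (by norm_num) (by nlinarith))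
  have hρpos : 0 < ρ := hspos.trans hsρ
  have hρ2lb : 2 / (5 - Real.sqrt 5) < ρ ^ 2 := by rw [← hs2]; nlinarith
  have hρ2ub : ρ ^ 2 < 1 := by nlinarith
  clear_value ρ s
  clear hr0 hr1 hρ hs hsρ hs2 hspos
  set x := 1 - 1 / (2 * ρ ^ 2) with hx
  have hinv : 1 / 2 < 1 / (2 * ρ ^ 2) := by
    rw [lt_div_iff₀ (by positivity)]; nlinarith
  have hx1 : x < 1 / 2 := by rw [hx]; linarith
  have hx0 : (Real.sqrt 5 - 1) / 4 < x := by
    rw [hx, lt_sub_iff_add_lt]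
    have h1 : 1 / (2 * ρ ^ 2) < (5 - Real.sqrt 5) / 4 := by
      rw [div_lt_div_iff₀ (by positivity) (by norm_num)]
      rw [div_lt_iff₀ (by nlinarith)] at hρ2lb
      nlinarith
    nlinarith
  clear_value x
  have hxm1 : (-1 : ℝ) < x := by linarith
  have hc3 : Real.arccos (1 / 2) = Real.pi / 3 :=
    Real.arccos_eq_of_eq_cos (by positivity) (by linarith [Real.pi_pos])
      Real.cos_pi_div_three.symm
  have hc25 : Real.arccos ((Real.sqrt 5 - 1) / 4) = 2 * Real.pi / 5 := by
    apply Real.arccos_eq_of_eq_cos (by positivity) (by linarith [Real.pi_pos])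
    have h : (2 : ℝ) * Real.pi / 5 = 2 * (Real.pi / 5) := by ring
    rw [h, Real.cos_two_mul, Real.cos_pi_div_five]
    nlinarith
  have hθ1 : Real.pi / 3 < Real.arccos x := by
    rw [← hc3]
    exact Real.strictAntiOn_arccos ⟨hxm1.le, by linarith⟩ ⟨by norm_num, by norm_num⟩ hx1
  have hθ2 : Real.arccos x < 2 * Real.pi / 5 := by
    rw [← hc25]
    exact Real.strictAntiOn_arccos ⟨by nlinarith, by nlinarith⟩ ⟨hxm1.le, by linarith⟩ hx0
  have hθpos : 0 < Real.arccos x := lt_trans (by positivity) hθ1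
  refine ⟨?_, hθ1, hθ2⟩
  rw [Nat.ceil_eq_iff (by norm_num)]
  refine ⟨?_, ?_⟩
  · push_cast
    rw [lt_div_iff₀ hθpos]
    linarith
  · push_cast
    rw [div_le_iff₀ hθpos]
    linarith
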